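/- arXiv:1508.03679 — 3 statements merged into one kernel-verified Lean document; each statement's English description precedes it below -/
import Mathlib

section
/- Changing k coordinates of the input to g^(mid) decreases its output by at most 4k/n: if t, t' ∈ [-1,1]^n differ in at most k coordinates, then g^(mid)(t') ≥ g^(mid)(t) − 4k/n. -/
open Finset

/-- The solid hypercube `[-1,1]^n`. -/
def cube (n : ℕ) : Set (Fin n → ℝ) := {t | ∀ i, t i ∈ Set.Icc (-1 : ℝ) 1}

/-- The solid hypercube `[0,1]^n`. -/
def cube01 (n : ℕ) : Set (Fin n → ℝ) := {t | ∀ i, t i ∈ Set.Icc (0 : ℝ) 1}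

/-- `D` is a probability distribution over subsets of `[n]`. -/
def IsDist {n : ℕ} (D : Finset (Fin n) → ℝ) : Prop :=
  (∀ R, 0 ≤ D R) ∧ ∑ R : Finset (Fin n), D R = 1

/-- `D` is `α`-light: each coordinate is corrupted with (marginal) probability at most `α`. -/
def IsLight {n : ℕ} (D : Finset (Fin n) → ℝ) (α : ℝ) : Prop :=
  ∀ i : Fin n, ∑ R ∈ Finset.univ.filter (fun R => i ∈ R), D R ≤ α

/-- `min { g t' : t' ∈ K, t' ⊳_R t }`, the worst-case corruption of `t` on `R` within `K`. -/
noncomputable def corruptMin {n : ℕ} (K : Set (Fin n → ℝ)) (g : (Fin n → ℝ) → ℝ)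
    (R : Finset (Fin n)) (t : Fin n → ℝ) : ℝ :=
  sInf (g '' {t' ∈ K | ∀ i ∉ R, t' i = t i})

/-- `g : K → ℝ` is `β`-(noise-)stable. -/
def Stable {n : ℕ} (K : Set (Fin n → ℝ)) (g : (Fin n → ℝ) → ℝ) (β : ℝ) : Prop :=
  ∀ t ∈ K, ∀ α : ℝ, α ∈ Set.Ioc (0 : ℝ) 1 →
    ∀ D : Finset (Fin n) → ℝ, IsDist D → IsLight D α →
      g t - α * β ≤ ∑ R : Finset (Fin n), D R * corruptMin K g R t

/-- `g` is `c`-Lipschitz on `K` with respect to the `L^∞` norm. -/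
def LipschitzLinf {n : ℕ} (K : Set (Fin n → ℝ)) (g : (Fin n → ℝ) → ℝ) (c : ℝ) : Prop :=
  ∀ t ∈ K, ∀ t' ∈ K, ∀ d : ℝ, 0 ≤ d → (∀ i, |t i - t' i| ≤ d) → |g t - g t'| ≤ c * d

/-- The `i`-th largest entry of `t` (1-indexed): `t_[i]`. -/
noncomputable def kthLargest {n : ℕ} (t : Fin n → ℝ) (i : ℕ) : ℝ :=
  ((List.ofFn t).insertionSort (· ≥ ·)).getD (i - 1) 0

/-- `g^(mid)`: the average of all entries except the top and bottom quartiles. -/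
noncomputable def gmid {n : ℕ} (t : Fin n → ℝ) : ℝ :=
  ((((3 * n + 3) / 4 - n / 4 : ℕ) : ℝ))⁻¹ *
    ∑ i ∈ Finset.Icc (n / 4 + 1) ((3 * n + 3) / 4), kthLargest t i

/-!
Changing `k` coordinates moves every order statistic by at most `k` places:
`t_[i + k] ≤ t'_[i]`. Summing over the middle window of length `m ≥ n / 2`, the sum of
`t_[i] - t'_[i]` is bounded by a telescoping sum whose `k` surviving terms at each end
lie in `[-1, 1]`, so the window sums differ by at most `2k` and the averages by at most
`2k / m ≤ 4k / n`.
-/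

namespace List

theorem SortedGE.le_getElem_iff_lt_countP {α : Type*} [LinearOrder α] {l : List α}
    (hl : l.SortedGE) {p : ℕ} (hp : p < l.length) (v : α) :
    v ≤ l[p] ↔ p < l.countP (fun x => v ≤ x) := by
  have hanti := sortedGE_iff_getElem_ge_getElem_of_le.mp hl
  constructor
  · intro hv
    have htake : (l.take (p + 1)).countP (fun x => v ≤ x) = p + 1 := by
      rw [countP_eq_length.mpr, length_take, Nat.min_eq_left hp]
      intro x hx
      obtain ⟨j, hj, rfl⟩ := mem_take_iff_getElem.mp hx
      exact decide_eq_true (hv.trans (hanti (by omega)))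
    have := (take_sublist (p + 1) l).countP_le (p := fun x => v ≤ x)
    omega
  · intro hcount
    by_contra! hlt
    have hdrop : (l.drop p).countP (fun x => v ≤ x) = 0 := by
      refine countP_eq_zero.mpr fun x hx => ?_
      obtain ⟨j, hj, rfl⟩ := mem_drop_iff_getElem.mp hx
      simpa using (hanti (Nat.le_add_right p j)).trans_lt hlt
    have htake : (l.take p).countP (fun x => v ≤ x) ≤ p :=
      countP_le_length.trans (length_take_le p l)
    rw [← take_append_drop p l, countP_append] at hcount
    omega

end List

section OrderStatistics

variable {n : ℕ}

theorem kthLargest_mem_Icc {t : Fin n → ℝ} (ht : t ∈ cube n) (i : ℕ) :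
    kthLargest t i ∈ Set.Icc (-1 : ℝ) 1 := by
  unfold kthLargest
  rw [List.getD_eq_getElem?_getD]
  cases h : ((List.ofFn t).insertionSort (· ≥ ·))[i - 1]? with
  | none => norm_num
  | some x =>
    have hx := (List.perm_insertionSort _ (List.ofFn t)).mem_iff.mp (List.mem_of_getElem? h)
    obtain ⟨j, rfl⟩ := List.mem_ofFn.mp hx
    exact ht j

theorem le_kthLargest_iff (t : Fin n → ℝ) {p : ℕ} (hp : p < n) (v : ℝ) :
    v ≤ kthLargest t (p + 1) ↔ p < #{j | v ≤ t j} := by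
  have hperm := List.perm_insertionSort (· ≥ ·) (List.ofFn t)
  have hlen : p < ((List.ofFn t).insertionSort (· ≥ ·)).length := by
    rw [hperm.length_eq, List.length_ofFn]; exact hp
  have hcount :
      ((List.ofFn t).insertionSort (· ≥ ·)).countP (fun x => v ≤ x) = #{j | v ≤ t j} := by
    rw [hperm.countP_eq, List.ofFn_eq_map, List.countP_map, List.countP_eq_length_filter]
    rfl
  rw [kthLargest, Nat.add_sub_cancel, List.getD_eq_getElem _ _ hlen, ← hcount]
  exact List.sortedGE_insertionSort.le_getElem_iff_lt_countP hlen v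

theorem kthLargest_add_le_of_card_ne_le {t t' : Fin n → ℝ} {k : ℕ}
    (hdiff : #{j | t j ≠ t' j} ≤ k) {p : ℕ} (hp : p + k < n) :
    kthLargest t (p + k + 1) ≤ kthLargest t' (p + 1) := by
  set v := kthLargest t (p + k + 1)
  have hv : p + k < #{j | v ≤ t j} := (le_kthLargest_iff t hp v).mp le_rfl
  have hcover : ({j | v ≤ t j} : Finset (Fin n)) ⊆
      ({j | v ≤ t' j} : Finset (Fin n)) ∪ ({j | t j ≠ t' j} : Finset (Fin n)) := by
    intro j
    simp only [mem_union, mem_filter, mem_univ, true_and]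
    exact fun hj => (em (t j = t' j)).imp (fun h : t j = t' j => h ▸ hj) id
  have hcard := (card_le_card hcover).trans (card_union_le _ _)
  exact (le_kthLargest_iff t' (by omega) v).mpr (by omega)

theorem gmid_eq_sum_range (t : Fin n → ℝ) :
    gmid t = ((((3 * n + 3) / 4 - n / 4 : ℕ) : ℝ))⁻¹ *
      ∑ p ∈ range ((3 * n + 3) / 4 - n / 4), kthLargest t (n / 4 + p + 1) := by
  rw [gmid, ← Ico_add_one_right_eq_Icc, sum_Ico_eq_sum_range, Nat.add_sub_add_right]
  simp only [add_right_comm]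

end OrderStatistics

theorem sum_range_sub_sum_range_shift_le {f : ℕ → ℝ}
    (hf : ∀ i, f i ∈ Set.Icc (-1 : ℝ) 1) (m k : ℕ) : ∑ i ∈ range m, f i - ∑ i ∈ range m, f (i + k) ≤ 2 * k := by
  have htele : ∑ i ∈ range m, f i - ∑ i ∈ range m, f (i + k)
      = ∑ i ∈ range k, f i - ∑ i ∈ range k, f (m + i) := by
    have h₁ := sum_range_add f m k
    have h₂ := sum_range_add f k m
    simp only [add_comm k] at h₂
    linarith
  have hupper : ∑ i ∈ range k, f i ≤ k := by
    simpa using sum_le_sum fun i (_ : i ∈ range k) => (hf i).2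
  have hlower : -(k : ℝ) ≤ ∑ i ∈ range k, f (m + i) := by
    simpa using sum_le_sum fun i (_ : i ∈ range k) => (hf (m + i)).1
  linarith

theorem sum_range_sub_le_of_shift_le {x y : ℕ → ℝ} {s m k N : ℕ}
    (hx : ∀ i, x i ∈ Set.Icc (-1 : ℝ) 1) (hy : ∀ i, -1 ≤ y i)
    (hshift : ∀ p, p + k < N → x (p + k) ≤ y p) (hN : s + m ≤ N) :
    ∑ p ∈ range m, x (s + p) - ∑ p ∈ range m, y (s + p) ≤ 2 * k := by
  -- Padding with `-1` past `N` makes `w (p + k) ≤ y p` hold for every `p`.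
  set w : ℕ → ℝ := fun j => if j < N then x j else -1
  have hw : ∀ j, w j ∈ Set.Icc (-1 : ℝ) 1 := fun j => by
    by_cases hj : j < N <;> simp [w, hj, hx j]
  calc ∑ p ∈ range m, x (s + p) - ∑ p ∈ range m, y (s + p)
      = ∑ p ∈ range m, (x (s + p) - y (s + p)) := (sum_sub_distrib _ _).symm
    _ ≤ ∑ p ∈ range m, (w (s + p) - w (s + p + k)) := by
      refine sum_le_sum fun p hp => ?_
      have hxw : w (s + p) = x (s + p) := if_pos (by rw [mem_range] at hp; omega)
      have hwy : w (s + p + k) ≤ y (s + p) := by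
        by_cases h : s + p + k < N
        · simpa [w, h] using hshift (s + p) h
        · simpa [w, h] using hy (s + p)
      linarith
    _ = ∑ p ∈ range m, w (s + p) - ∑ p ∈ range m, w (s + (p + k)) := by
      simp only [sum_sub_distrib, add_assoc]
    _ ≤ 2 * k := sum_range_sub_sum_range_shift_le (fun i => hw (s + i)) m k

/-- changing at most `k` coordinates decreases `g^(mid)` by at most `4k/n`. -/
theorem gmid_change_k_coords {n k : ℕ} (t t' : Fin n → ℝ)
    (ht : t ∈ cube n) (ht' : t' ∈ cube n)
    (hdiff : (Finset.univ.filter (fun i => t i ≠ t' i)).card ≤ k) :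
    gmid t - 4 * k / n ≤ gmid t' := by
  set m := (3 * n + 3) / 4 - n / 4
  have hwindow : ∑ p ∈ range m, kthLargest t (n / 4 + p + 1)
      - ∑ p ∈ range m, kthLargest t' (n / 4 + p + 1) ≤ 2 * k :=
    sum_range_sub_le_of_shift_le (x := fun p => kthLargest t (p + 1))
      (y := fun p => kthLargest t' (p + 1)) (fun _ => kthLargest_mem_Icc ht _)
      (fun _ => (kthLargest_mem_Icc ht' _).1)
      (fun p hp => kthLargest_add_le_of_card_ne_le hdiff hp) (by omega)
  have hgap : gmid t - gmid t' ≤ (m : ℝ)⁻¹ * (2 * k) := by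
    rw [gmid_eq_sum_range, gmid_eq_sum_range, ← mul_sub]
    exact mul_le_mul_of_nonneg_left hwindow (by positivity)
  rcases Nat.eq_zero_or_pos n with rfl | hn
  · simp [m] at hgap ⊢
    linarith
  have hm : (n : ℝ) / 2 ≤ m := by
    rw [div_le_iff₀ two_pos]; exact_mod_cast (by omega : n ≤ m * 2)
  have hratio : (m : ℝ)⁻¹ * (2 * k) ≤ 4 * k / n :=
    calc (m : ℝ)⁻¹ * (2 * k) = 2 * k / m := inv_mul_eq_div _ _
      _ ≤ 2 * k / (n / 2) := div_le_div_of_nonneg_left (by positivity) (by positivity) hm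
      _ = 4 * k / n := by field_simp; ring
  linarith
end

section
/- Let g : [-1,1]^n → [-1,1] be β-stable, let h be a (δ,ρ)-relaxation of g, let A be an n × m matrix with entries in [-1,1], let α > 0, and let s ≥ 2 ln(2/α)/δ² be an integer. Fix x ∈ Δ_m and let x̃ be the empirical distribution of s i.i.d. samples from x. Then E[h(A x̃)] ≥ g(A x) − αβ − ρ. -/
open Finset

/-- `h` is a `(δ,ρ)`-relaxation of `g` on `K`. -/
def Relaxation {n : ℕ} (K : Set (Fin n → ℝ)) (h g : (Fin n → ℝ) → ℝ) (δ ρ : ℝ) : Prop :=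
  ∀ t₁ ∈ K, ∀ t₂ ∈ K, (∀ i, |t₁ i - t₂ i| ≤ δ) → g t₁ - ρ ≤ h t₂

/-!
Put `t = A x` and `t̃ = A x̃`. Each coordinate `t̃ᵢ` is the mean of `s` independent samples of
`A i ·` with mean `tᵢ`, so by Hoeffding's inequality `|t̃ᵢ - tᵢ| > δ` has probability at most
`2 exp (-s δ² / 2) ≤ α`. Hence the random set `R` of such coordinates has an `α`-light law, and
stability bounds `g t - α β` by the expectation of the worst value of `g` over points agreeing with
`t` outside `R`. One such point agrees with `t̃` on `R`; it is `δ`-close to `t̃`, so the relaxation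
bounds `g` there by `h t̃ + ρ`.
-/

open MeasureTheory ProbabilityTheory

section SampleMeasure

variable {ι : Type*} [Fintype ι] {x : ι → ℝ}

theorem sum_prod_eq_one_of_mem_stdSimplex (hx : x ∈ stdSimplex ℝ ι) (s : ℕ) :
    ∑ k : Fin s → ι, ∏ l, x (k l) = 1 := by
  rw [← Fintype.prod_sum (fun _ j => x j), hx.2, prod_const_one]

variable [MeasurableSpace ι] [DiscreteMeasurableSpace ι]

noncomputable def sampleMeasure (hx : x ∈ stdSimplex ℝ ι) (s : ℕ) : Measure (Fin s → ι) :=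
  Measure.pi fun _ => (PMF.ofFintype (fun j => ENNReal.ofReal (x j)) (by
    rw [← ENNReal.ofReal_sum_of_nonneg fun j _ => hx.1 j, hx.2, ENNReal.ofReal_one])).toMeasure

variable (hx : x ∈ stdSimplex ℝ ι) (s : ℕ)

instance : IsProbabilityMeasure (sampleMeasure hx s) := by
  unfold sampleMeasure; infer_instance

theorem sampleMeasure_real_finset (S : Finset (Fin s → ι)) :
    (sampleMeasure hx s).real S = ∑ k ∈ S, ∏ l, x (k l) := by
  rw [← sum_measureReal_singleton]
  refine sum_congr rfl fun k _ => ?_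
  simp only [sampleMeasure, measureReal_def, Measure.pi_singleton, ENNReal.toReal_prod,
    PMF.toMeasure_apply_singleton _ _ (measurableSet_singleton _), PMF.ofFintype_apply,
    ENNReal.toReal_ofReal (hx.1 _)]

theorem integral_sampleMeasure_apply (a : ι → ℝ) (l : Fin s) :
    ∫ k, a (k l) ∂sampleMeasure hx s = ∑ j, a j * x j := by
  rw [← integral_map (measurable_pi_apply l).aemeasurable
    Measurable.of_discrete.aestronglyMeasurable, sampleMeasure,
    (measurePreserving_eval _ l).map_eq, PMF.integral_eq_sum]
  simp [ENNReal.toReal_ofReal (hx.1 _), mul_comm]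

theorem hasSubgaussianMGF_sum_sampleMeasure {a : ι → ℝ} (ha : ∀ j, a j ∈ Set.Icc (-1 : ℝ) 1) :
    HasSubgaussianMGF (fun k : Fin s → ι => ∑ l, (a (k l) - ∑ j, a j * x j)) s
      (sampleMeasure hx s) := by
  have hindep : iIndepFun (fun l (k : Fin s → ι) => a (k l) - ∑ j, a j * x j)
      (sampleMeasure hx s) :=
    iIndepFun_pi (X := fun _ j => a j - ∑ j, a j * x j) fun _ =>
      Measurable.of_discrete.aemeasurable
  have hsample (l : Fin s) :
      HasSubgaussianMGF (fun k : Fin s → ι => a (k l) - ∑ j, a j * x j) 1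
        (sampleMeasure hx s) := by
    have := hasSubgaussianMGF_of_mem_Icc (μ := sampleMeasure hx s)
      Measurable.of_discrete.aemeasurable (ae_of_all _ fun k => ha (k l))
    rw [integral_sampleMeasure_apply] at this
    convert this
    norm_num
  simpa using HasSubgaussianMGF.sum_of_iIndepFun hindep (s := univ) fun l _ => hsample l

theorem sampleMeasure_real_abs_sum_ge_le {a : ι → ℝ} (ha : ∀ j, a j ∈ Set.Icc (-1 : ℝ) 1)
    {ε : ℝ} (hε : 0 ≤ ε) :
    (sampleMeasure hx s).real {k | ε ≤ |∑ l, (a (k l) - ∑ j, a j * x j)|}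
      ≤ 2 * Real.exp (-ε ^ 2 / (2 * s)) := by
  have hsum := hasSubgaussianMGF_sum_sampleMeasure hx s ha
  have hsplit : {k : Fin s → ι | ε ≤ |∑ l, (a (k l) - ∑ j, a j * x j)|}
      = {k | ε ≤ ∑ l, (a (k l) - ∑ j, a j * x j)}
        ∪ {k | ε ≤ (-∑ l, (a (k l) - ∑ j, a j * x j))} := by
    ext k
    exact le_abs (a := ε)
  rw [hsplit, two_mul]
  have hupper := hsum.measure_ge_le hε
  have hlower := hsum.neg.measure_ge_le hε
  push_cast at hupper hlower
  exact (measureReal_union_le _ _).trans (add_le_add hupper hlower)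

end SampleMeasure

theorem sum_prod_filter_abs_sum_ge_le {ι : Type*} [Fintype ι] {x : ι → ℝ}
    (hx : x ∈ stdSimplex ℝ ι) {a : ι → ℝ} (ha : ∀ j, a j ∈ Set.Icc (-1 : ℝ) 1) (s : ℕ) {ε : ℝ}
    (hε : 0 ≤ ε) :
    ∑ k : Fin s → ι with ε ≤ |∑ l, (a (k l) - ∑ j, a j * x j)|, ∏ l, x (k l)
      ≤ 2 * Real.exp (-ε ^ 2 / (2 * s)) := by
  let _ : MeasurableSpace ι := ⊤
  rw [← sampleMeasure_real_finset hx, coe_filter_univ]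
  exact sampleMeasure_real_abs_sum_ge_le hx s ha hε

/-- For `s = 0` this is the zero vector, as `x / 0 = 0`. -/
noncomputable def empiricalDist {ι : Type*} [DecidableEq ι] {s : ℕ} (k : Fin s → ι) (j : ι) : ℝ :=
  (#{i | k i = j} : ℝ) / s

theorem empiricalDist_nonneg {ι : Type*} [DecidableEq ι] {s : ℕ} (k : Fin s → ι) (j : ι) :
    0 ≤ empiricalDist k j := by
  unfold empiricalDist; positivity

section Empirical

variable {ι : Type*} [Fintype ι] [DecidableEq ι] {x : ι → ℝ} {s : ℕ}

theorem sum_mul_empiricalDist (a : ι → ℝ) (k : Fin s → ι) :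
    ∑ j, a j * empiricalDist k j = (∑ l, a (k l)) / s := by
  simp_rw [empiricalDist, mul_div_assoc', ← sum_div, ← sum_fiberwise' univ k a, sum_const,
    nsmul_eq_mul, mul_comm]

theorem sum_empiricalDist_le_one (k : Fin s → ι) : ∑ j, empiricalDist k j ≤ 1 := by
  have := sum_mul_empiricalDist (fun _ => (1 : ℝ)) k
  simp only [one_mul, sum_const, card_univ, Fintype.card_fin, nsmul_eq_mul, mul_one] at this
  exact this.trans_le (div_self_le_one _)

theorem sum_prod_filter_lt_abs_empiricalDist_sub_le (hx : x ∈ stdSimplex ℝ ι) {a : ι → ℝ}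
    (ha : ∀ j, a j ∈ Set.Icc (-1 : ℝ) 1) (s : ℕ) {δ : ℝ} (hδ : 0 ≤ δ) :
    ∑ k : Fin s → ι with δ < |∑ j, a j * empiricalDist k j - ∑ j, a j * x j|, ∏ l, x (k l)
      ≤ 2 * Real.exp (-s * δ ^ 2 / 2) := by
  have hsub (k : Fin s → ι) (hk : δ < |∑ j, a j * empiricalDist k j - ∑ j, a j * x j|) :
      s * δ ≤ |∑ l, (a (k l) - ∑ j, a j * x j)| := by
    rw [sum_mul_empiricalDist] at hk
    rw [sum_sub_distrib, sum_const, card_univ, Fintype.card_fin, nsmul_eq_mul]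
    rcases Nat.eq_zero_or_pos s with rfl | hs
    · simp
    · have hs' : (0 : ℝ) < s := by positivity
      rw [div_sub' hs'.ne', abs_div, abs_of_pos hs', lt_div_iff₀' hs'] at hk
      exact hk.le
  have hexp : (s * δ) ^ 2 / (2 * s) = s * δ ^ 2 / 2 := by
    rcases eq_or_ne (s : ℝ) 0 with hs | hs
    · simp [hs]
    · field_simp
  calc _ ≤ ∑ k : Fin s → ι with s * δ ≤ |∑ l, (a (k l) - ∑ j, a j * x j)|, ∏ l, x (k l) :=
        sum_le_sum_of_subset_of_nonneg (monotone_filter_right _ fun k _ => hsub k)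
          fun k _ _ => prod_nonneg fun l _ => hx.1 (k l)
    _ ≤ 2 * Real.exp (-(s * δ) ^ 2 / (2 * s)) :=
        sum_prod_filter_abs_sum_ge_le hx ha s (by positivity)
    _ = 2 * Real.exp (-s * δ ^ 2 / 2) := by rw [neg_div, hexp, neg_mul, neg_div]

end Empirical

theorem two_mul_exp_neg_le {α δ s : ℝ} (hα : 0 < α) (hδ : 0 < δ)
    (hs : 2 * Real.log (2 / α) / δ ^ 2 ≤ s) : 2 * Real.exp (-s * δ ^ 2 / 2) ≤ α := by
  have hlog : Real.log (2 / α) ≤ s * δ ^ 2 / 2 := by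
    rw [div_le_iff₀ (by positivity)] at hs
    linarith
  calc 2 * Real.exp (-s * δ ^ 2 / 2) ≤ 2 * Real.exp (-Real.log (2 / α)) := by
        gcongr
        linarith
    _ = α := by
        rw [Real.exp_neg, Real.exp_log (by positivity)]
        field_simp

theorem mulVec_mem_cube {n : ℕ} {ι : Type*} [Fintype ι] {A : Matrix (Fin n) ι ℝ}
    (hA : ∀ i j, A i j ∈ Set.Icc (-1 : ℝ) 1) {y : ι → ℝ} (hy0 : ∀ j, 0 ≤ y j)
    (hy1 : ∑ j, y j ≤ 1) : A.mulVec y ∈ cube n := by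
  intro i
  rw [Set.mem_Icc, ← abs_le]
  calc |∑ j, A i j * y j| ≤ ∑ j, |A i j * y j| := abs_sum_le_sum_abs _ _
    _ ≤ ∑ j, y j := sum_le_sum fun j _ => by
        rw [abs_mul, abs_of_nonneg (hy0 j)]
        exact mul_le_of_le_one_left (hy0 j) (abs_le.mpr (hA i j))
    _ ≤ 1 := hy1

section Stability

variable {n : ℕ} {K : Set (Fin n → ℝ)} {g h : (Fin n → ℝ) → ℝ} {β δ ρ : ℝ} {t : Fin n → ℝ}

theorem corruptMin_empty (ht : t ∈ K) : corruptMin K g ∅ t = g t := by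
  have hfix : {t' ∈ K | ∀ i ∉ (∅ : Finset (Fin n)), t' i = t i} = {t} := by
    ext t'
    simp only [Set.mem_ofPred_eq, notMem_empty, not_false_eq_true, forall_const,
      Set.mem_singleton_iff, ← funext_iff]
    exact ⟨And.right, by rintro rfl; exact ⟨ht, rfl⟩⟩
  rw [corruptMin, hfix, Set.image_singleton, csInf_singleton]

theorem Stable.nonneg (hg : Stable K g β) (ht : t ∈ K) : 0 ≤ β := by
  let D : Finset (Fin n) → ℝ := fun R => if R = ∅ then 1 else 0
  have hD : IsDist D := ⟨fun R => by positivity, by simp [D]⟩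
  have hlight : IsLight D 1 := fun i => by
    rw [sum_eq_zero fun R hR => if_neg (ne_empty_of_mem (mem_filter.1 hR).2)]
    exact zero_le_one
  simpa [D, corruptMin_empty ht] using hg t ht 1 ⟨one_pos, le_rfl⟩ D hD hlight

variable {Ω : Type*} [Fintype Ω]

def pushDist (p : Ω → ℝ) (R : Ω → Finset (Fin n)) (S : Finset (Fin n)) : ℝ :=
  ∑ ω with R ω = S, p ω

theorem sum_pushDist_mul (p : Ω → ℝ) (R : Ω → Finset (Fin n)) (φ : Finset (Fin n) → ℝ) :
    ∑ S, pushDist p R S * φ S = ∑ ω, p ω * φ (R ω) := by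
  simp_rw [pushDist, sum_mul]
  rw [← sum_fiberwise univ R fun ω => p ω * φ (R ω)]
  exact sum_congr rfl fun S _ => sum_congr rfl fun ω hω => by rw [(mem_filter.1 hω).2]

theorem isDist_pushDist {p : Ω → ℝ} (hp0 : ∀ ω, 0 ≤ p ω) (hp1 : ∑ ω, p ω = 1)
    (R : Ω → Finset (Fin n)) : IsDist (pushDist p R) :=
  ⟨fun _ => sum_nonneg fun ω _ => hp0 ω, (sum_fiberwise univ R p).trans hp1⟩

theorem isLight_pushDist {p : Ω → ℝ} {R : Ω → Finset (Fin n)} {α : ℝ}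
    (hR : ∀ i, ∑ ω with i ∈ R ω, p ω ≤ α) : IsLight (pushDist p R) α := by
  intro i
  have := sum_pushDist_mul p R fun S => if i ∈ S then 1 else 0
  simp only [mul_ite, mul_one, mul_zero, ← sum_filter] at this
  exact this ▸ hR i

theorem corruptMin_le_of_relaxation (hbdd : BddBelow (g '' cube n))
    (hrelax : Relaxation (cube n) h g δ ρ) (hδ : 0 ≤ δ) {t' : Fin n → ℝ} (ht : t ∈ cube n)
    (ht' : t' ∈ cube n) : corruptMin (cube n) g {i | δ < |t' i - t i|} t ≤ h t' + ρ := by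
  set R : Finset (Fin n) := {i | δ < |t' i - t i|}
  let u : Fin n → ℝ := fun i => if i ∈ R then t' i else t i
  have hu : u ∈ cube n := fun i => by
    by_cases hi : i ∈ R <;> simp only [u, hi, if_true, if_false, ht i, ht' i]
  have hclose (i : Fin n) : |u i - t' i| ≤ δ := by
    by_cases hi : i ∈ R
    · simpa [u, hi] using hδ
    · simp only [u, hi, if_false]
      rw [abs_sub_comm]
      simpa [R] using hi
  have hmin : corruptMin (cube n) g R t ≤ g u :=
    csInf_le (hbdd.mono (Set.image_mono fun _ hv => hv.1)) ⟨u, ⟨hu, fun i hi => if_neg hi⟩, rfl⟩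
  linarith [hrelax u hu t' ht' hclose]

theorem Stable.sub_sub_le_sum_mul_of_relaxation (hstable : Stable (cube n) g β)
    (hbdd : BddBelow (g '' cube n)) (hrelax : Relaxation (cube n) h g δ ρ) (hδ : 0 ≤ δ)
    {α : ℝ} (hα : 0 < α) {p : Ω → ℝ} (hp0 : ∀ ω, 0 ≤ p ω) (hp1 : ∑ ω, p ω = 1)
    {T : Ω → Fin n → ℝ} (hT : ∀ ω, T ω ∈ cube n) (ht : t ∈ cube n)
    (hdev : ∀ i, ∑ ω with δ < |T ω i - t i|, p ω ≤ α) :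
    g t - α * β - ρ ≤ ∑ ω, p ω * h (T ω) := by
  let R : Ω → Finset (Fin n) := fun ω => {i | δ < |T ω i - t i|}
  have hlight : IsLight (pushDist p R) (min α 1) := isLight_pushDist fun i => by
    simp only [R, mem_filter_univ]
    exact le_min (hdev i)
      ((sum_le_sum_of_subset_of_nonneg (filter_subset _ _) fun ω _ _ => hp0 ω).trans hp1.le)
  have hstab := hstable t ht (min α 1) ⟨lt_min hα one_pos, min_le_right _ _⟩ _
    (isDist_pushDist hp0 hp1 R) hlight
  rw [sum_pushDist_mul] at hstab
  -- stability is only assumed for `α ≤ 1`; for larger `α` we use `β ≥ 0`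
  have hβ := hstable.nonneg ht
  calc g t - α * β - ρ ≤ g t - min α 1 * β - ρ := by gcongr; exact min_le_left _ _
    _ ≤ ∑ ω, p ω * corruptMin (cube n) g (R ω) t - ρ := by linarith
    _ ≤ ∑ ω, p ω * (h (T ω) + ρ) - ρ := by
        gcongr with ω
        · exact hp0 ω
        · exact corruptMin_le_of_relaxation hbdd hrelax hδ ht (hT ω)
    _ = ∑ ω, p ω * h (T ω) := by simp [mul_add, sum_add_distrib, ← sum_mul, hp1]

end Stability

theorem mixture_sampling_bicriteria_general {n m : ℕ} (β α δ ρ : ℝ)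
    (hα : 0 < α) (hδ : 0 < δ)
    (g h : (Fin n → ℝ) → ℝ)
    (hgrange : ∀ t ∈ cube n, g t ∈ Set.Icc (-1 : ℝ) 1)
    (hstable : Stable (cube n) g β)
    (hrelax : Relaxation (cube n) h g δ ρ)
    (A : Matrix (Fin n) (Fin m) ℝ) (hA : ∀ i j, A i j ∈ Set.Icc (-1 : ℝ) 1)
    (s : ℕ) (hs : 2 * Real.log (2 / α) / δ ^ 2 ≤ s)
    (x : Fin m → ℝ) (hx : x ∈ stdSimplex ℝ (Fin m)) :
    g (A.mulVec x) - α * β - ρ ≤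
      ∑ k : Fin s → Fin m, (∏ i, x (k i)) *
        h (A.mulVec fun j => ((Finset.univ.filter fun i => k i = j).card : ℝ) / s) := by
  have hbdd : BddBelow (g '' cube n) :=
    ⟨-1, Set.forall_mem_image.2 fun t ht => (hgrange t ht).1⟩
  refine hstable.sub_sub_le_sum_mul_of_relaxation (T := fun k => A.mulVec (empiricalDist k))
    hbdd hrelax hδ.le hα (fun k => prod_nonneg fun l _ => hx.1 (k l))
    (sum_prod_eq_one_of_mem_stdSimplex hx s)
    (fun k => mulVec_mem_cube hA (empiricalDist_nonneg k) (sum_empiricalDist_le_one k))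
    (mulVec_mem_cube hA hx.1 hx.2.le) fun i => ?_
  calc _ ≤ 2 * Real.exp (-s * δ ^ 2 / 2) :=
        sum_prod_filter_lt_abs_empiricalDist_sub_le hx (hA i) s hδ.le
    _ ≤ α := two_mul_exp_neg_le hα hδ hs

/-- bi-criteria sampling theorem. If `g` is `β`-stable and `h` is a
`(δ,ρ)`-relaxation of `g`, then `E[h(A x̃)] ≥ g(Ax) − αβ − ρ`. -/
theorem mixture_sampling_bicriteria {n m : ℕ} (β α δ ρ : ℝ)
    (hα : 0 < α) (hδ : 0 < δ) (hρ : 0 ≤ ρ)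
    (g h : (Fin n → ℝ) → ℝ)
    (hgrange : ∀ t ∈ cube n, g t ∈ Set.Icc (-1 : ℝ) 1)
    (hhrange : ∀ t ∈ cube n, h t ∈ Set.Icc (-1 : ℝ) 1)
    (hstable : Stable (cube n) g β)
    (hrelax : Relaxation (cube n) h g δ ρ)
    (A : Matrix (Fin n) (Fin m) ℝ) (hA : ∀ i j, A i j ∈ Set.Icc (-1 : ℝ) 1)
    (s : ℕ) (hs : 2 * Real.log (2 / α) / δ ^ 2 ≤ s)
    (x : Fin m → ℝ) (hx : x ∈ stdSimplex ℝ (Fin m)) :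
    g (A.mulVec x) - α * β - ρ ≤
      ∑ k : Fin s → Fin m, (∏ i, x (k i)) *
        h (A.mulVec fun j => ((Finset.univ.filter fun i => k i = j).card : ℝ) / s) :=
  mixture_sampling_bicriteria_general β α δ ρ hα hδ g h hgrange hstable hrelax A hA s hs x hx
end

section
/- The function max2 : [0,1]^n → [0,1] returning the second-largest entry of its input (n ≥ 2) is 2-stable: for every t ∈ [0,1]^n, every α ∈ (0,1], and every α-light distribution D over subsets of [n], E_{R∼D}[min{max2(t') : t' ⊳_R t}] ≥ max2(t) − 2α. -/
open Finset

/-- `max2 t` is the second-largest entry of `t`. -/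
noncomputable def max2 {n : ℕ} (t : Fin n → ℝ) : ℝ := kthLargest t 2

/-!
Let `i ≠ j` carry the two largest entries of `t`, so both are `≥ max2 t`. If the corrupted set `R`
avoids `i` and `j`, every `t'` agreeing with `t` off `R` still has two distinct entries
`≥ max2 t`, hence `max2 t' ≥ max2 t`; by the union bound this happens with probability
`≥ 1 - 2α`. Otherwise `max2 t' ≥ 0` on `[0,1]^n`, so the expectation is at least
`(1 - 2α) max2 t ≥ max2 t - 2α`, using `max2 t ≤ 1`.
-/

section SortedDesc

variable {α : Type*} [LinearOrder α]

lemma List.Pairwise.countP_getElem_one_lt_le_one {l : List α} (hl : l.Pairwise (· ≥ ·))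
    (h : 1 < l.length) : l.countP (fun x => l[1] < x) ≤ 1 := by
  match l, hl, h with
  | a :: b :: rest, hl, _ =>
    have hrest : rest.countP (fun x => b < x) = 0 :=
      List.countP_eq_zero.2 fun x hx => by
        simpa using (List.pairwise_cons.1 (List.pairwise_cons.1 hl).2).1 x hx
    simp only [List.getElem_cons_succ, List.getElem_cons_zero, List.countP_cons, lt_self_iff_false,
      decide_false, hrest]
    split_ifs <;> simp_all

lemma List.Pairwise.two_le_countP_getElem_one_le {l : List α} (hl : l.Pairwise (· ≥ ·))
    (h : 1 < l.length) : 2 ≤ l.countP (fun x => l[1] ≤ x) := by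
  match l, hl, h with
  | a :: b :: rest, hl, _ =>
    have hab : b ≤ a := (List.pairwise_cons.1 hl).1 b (by simp)
    simp [hab]

lemma length_insertionSort_ofFn {n : ℕ} (t : Fin n → α) :
    ((List.ofFn t).insertionSort (· ≥ ·)).length = n := by
  rw [List.length_insertionSort, List.length_ofFn]

lemma countP_insertionSort_ofFn {n : ℕ} (t : Fin n → α) (p : α → Prop) [DecidablePred p] :
    ((List.ofFn t).insertionSort (· ≥ ·)).countP (fun x => p x) = #{i | p (t i)} := by
  rw [(List.perm_insertionSort _ _).countP_eq, ← Multiset.coe_countP, List.ofFn_eq_map,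
    ← Multiset.map_coe, Multiset.countP_map]
  rfl

end SortedDesc

section Max2

variable {n : ℕ}

lemma max2_eq_getElem {t : Fin n → ℝ} (h : 1 < ((List.ofFn t).insertionSort (· ≥ ·)).length) :
    max2 t = ((List.ofFn t).insertionSort (· ≥ ·))[1] :=
  List.getD_eq_getElem _ 0 h

lemma min_le_max2 {t : Fin n → ℝ} {i j : Fin n} (hij : i ≠ j) : min (t i) (t j) ≤ max2 t := by
  have hn : 1 < n := Fintype.one_lt_card_iff.2 ⟨i, j, hij⟩ |>.trans_eq (Fintype.card_fin n)
  have hlen := (length_insertionSort_ofFn t).symm ▸ hn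
  by_contra! hlt
  have hpair : {i, j} ⊆ ({k | max2 t < t k} : Finset (Fin n)) := by
    intro k hk
    rcases mem_insert.1 hk with rfl | hk
    · simpa using (lt_min_iff.1 hlt).1
    · simpa [mem_singleton.1 hk] using (lt_min_iff.1 hlt).2
  have hcount := (List.pairwise_insertionSort _ (List.ofFn t)).countP_getElem_one_lt_le_one hlen
  rw [← max2_eq_getElem hlen, countP_insertionSort_ofFn t (max2 t < ·)] at hcount
  have := card_le_card hpair
  rw [card_pair hij] at this
  omega

lemma exists_ne_max2_le (hn : 2 ≤ n) (t : Fin n → ℝ) :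
    ∃ i j, i ≠ j ∧ max2 t ≤ t i ∧ max2 t ≤ t j := by
  have hlen : 1 < ((List.ofFn t).insertionSort (· ≥ ·)).length := by
    rw [length_insertionSort_ofFn]; omega
  have hcount := (List.pairwise_insertionSort _ (List.ofFn t)).two_le_countP_getElem_one_le hlen
  rw [← max2_eq_getElem hlen, countP_insertionSort_ofFn t (max2 t ≤ ·)] at hcount
  obtain ⟨i, hi, j, hj, hij⟩ := one_lt_card.1 hcount
  exact ⟨i, j, hij, (mem_filter.1 hi).2, (mem_filter.1 hj).2⟩

lemma max2_mem_Icc (hn : 2 ≤ n) {t : Fin n → ℝ} (ht : t ∈ cube01 n) :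
    max2 t ∈ Set.Icc (0 : ℝ) 1 := by
  obtain ⟨i, _, _, hi, _⟩ := exists_ne_max2_le hn t
  have h01 : (⟨0, by omega⟩ : Fin n) ≠ ⟨1, by omega⟩ := by simp
  exact ⟨(le_min (ht _).1 (ht _).1).trans (min_le_max2 h01), hi.trans (ht i).2⟩

end Max2

lemma le_corruptMin {n : ℕ} {K : Set (Fin n → ℝ)} {g : (Fin n → ℝ) → ℝ} {R : Finset (Fin n)}
    {t : Fin n → ℝ} {c : ℝ} (ht : t ∈ K) (h : ∀ t' ∈ K, (∀ i ∉ R, t' i = t i) → c ≤ g t') :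
    c ≤ corruptMin K g R t :=
  le_csInf ⟨g t, t, ⟨ht, fun _ _ => rfl⟩, rfl⟩ fun _ ⟨t', ⟨ht', hR⟩, hg⟩ => hg ▸ h t' ht' hR

lemma IsLight.one_sub_two_mul_le_sum_filter_notMem {n : ℕ} {D : Finset (Fin n) → ℝ} {α : ℝ}
    (hL : IsLight D α) (hD : IsDist D) (i j : Fin n) :
    1 - 2 * α ≤ ∑ R with i ∉ R ∧ j ∉ R, D R := by
  have hsplit := sum_filter_add_sum_filter_not univ (fun R => i ∈ R ∨ j ∈ R) D
  have hunion : ∑ R with i ∈ R ∨ j ∈ R, D R ≤ ∑ R with i ∈ R, D R + ∑ R with j ∈ R, D R := by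
    rw [filter_or, ← sum_union_inter]
    exact le_add_of_nonneg_right (sum_nonneg fun R _ => hD.1 R)
  simp only [not_or] at hsplit
  linarith [hD.2, hL i, hL j]

lemma sub_le_sum_mul_of_le_on {ι : Type*} [Fintype ι] {D f : ι → ℝ} {G : Finset ι} {m ε : ℝ}
    (hD : ∀ x, 0 ≤ D x) (hf : ∀ x, 0 ≤ f x) (hm : m ∈ Set.Icc (0 : ℝ) 1) (hε : 0 ≤ ε)
    (hG : 1 - ε ≤ ∑ x ∈ G, D x) (hfG : ∀ x ∈ G, m ≤ f x) :
    m - ε ≤ ∑ x, D x * f x :=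
  calc m - ε ≤ (∑ x ∈ G, D x) * m := by nlinarith [hm.1, hm.2]
    _ = ∑ x ∈ G, D x * m := sum_mul _ _ _
    _ ≤ ∑ x ∈ G, D x * f x := sum_le_sum fun x hx => mul_le_mul_of_nonneg_left (hfG x hx) (hD x)
    _ ≤ ∑ x, D x * f x := sum_le_sum_of_subset_of_nonneg (subset_univ G)
      fun x _ _ => mul_nonneg (hD x) (hf x)

/-- the second-largest-entry function is 2-stable on `[0,1]^n` (`n ≥ 2`). -/
theorem max2_stable {n : ℕ} (hn : 2 ≤ n) : Stable (cube01 n) (max2 (n := n)) 2 := by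
  intro t ht α hα D hD hL
  obtain ⟨i, j, hij, hi, hj⟩ := exists_ne_max2_le hn t
  have hgood := hL.one_sub_two_mul_le_sum_filter_notMem hD i j
  have hnonneg (R : Finset (Fin n)) : 0 ≤ corruptMin (cube01 n) max2 R t :=
    le_corruptMin ht fun u hu _ => (max2_mem_Icc hn hu).1
  refine sub_le_sum_mul_of_le_on hD.1 hnonneg (max2_mem_Icc hn ht) (by linarith [hα.1])
    (by linarith) fun R hR => ?_
  obtain ⟨hiR, hjR⟩ := (mem_filter.1 hR).2
  refine le_corruptMin ht fun u _ hu => ?_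
  calc max2 t ≤ min (t i) (t j) := le_min hi hj
    _ = min (u i) (u j) := by rw [hu i hiR, hu j hjR]
    _ ≤ max2 u := min_le_max2 hij
end
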